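/- Let θ : ℝ → ℝ be a differentiable function satisfying θ′(t) = −θ(t)² for every t ∈ ℝ. Then θ(t) = 0 for all t ∈ ℝ. -/
import Mathlib

lemma riccati_aux (θ : ℝ → ℝ) (hθ : Differentiable ℝ θ)
    (hode : ∀ t : ℝ, deriv θ t = -(θ t) ^ 2) : ∀ t : ℝ, θ t ≤ 0 := by
  intro t₀
  by_contra hpos
  push_neg at hpos
  set c := θ t₀ with hc
  -- θ is antitone
  have hanti : Antitone θ := by
    apply antitone_of_deriv_nonpos hθ
    intro x
    rw [hode x]
    nlinarith [sq_nonneg (θ x)]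
  have hge : ∀ t ≤ t₀, c ≤ θ t := fun t ht => hanti ht
  set a := t₀ - (1 / c + 1) with ha
  have halt : a < t₀ := by
    have h0 : 0 < 1 / c + 1 := by positivity
    rw [ha]; linarith
  have hne : ∀ t ∈ Set.Icc a t₀, θ t ≠ 0 := by
    intro t ht
    have := hge t ht.2
    linarith
  -- ψ = 1/θ has derivative 1 on the interval
  have hψd : ∀ t ∈ Set.Icc a t₀, HasDerivAt (fun s => (θ s)⁻¹) 1 t := by
    intro t ht
    have h := ((hθ t).hasDerivAt).inv (hne t ht)
    have : -deriv θ t / θ t ^ 2 = 1 := by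
      rw [hode t, neg_neg]
      exact div_self (pow_ne_zero 2 (hne t ht))
    rwa [this] at h
  have hcont : ContinuousOn (fun s => (θ s)⁻¹) (Set.Icc a t₀) :=
    fun t ht => ((hψd t ht).continuousAt).continuousWithinAt
  obtain ⟨d, hd, hslope⟩ := exists_hasDerivAt_eq_slope (fun s => (θ s)⁻¹)
    (fun _ => 1) halt hcont (fun x hx => hψd x ⟨hx.1.le, hx.2.le⟩)
  -- slope = 1 gives (θ t₀)⁻¹ - (θ a)⁻¹ = t₀ - a = 1/c + 1
  have hsub : (θ t₀)⁻¹ - (θ a)⁻¹ = t₀ - a := by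
    have hne' : t₀ - a ≠ 0 := by linarith
    rw [eq_div_iff hne', one_mul] at hslope
    linarith
  have h1 : (θ a)⁻¹ > 0 := inv_pos.mpr (lt_of_lt_of_le hpos (hge a halt.le))
  have h2 : (θ t₀)⁻¹ = 1 / c := by rw [← hc, one_div]
  have h3 : t₀ - a = 1 / c + 1 := by rw [ha]; ring
  rw [h2, h3] at hsub
  linarith

/-- The only globally defined differentiable solution of the Riccati equation
`θ' = -θ²` on `ℝ` is the zero function. -/
theorem riccati_mu_zero_complete_solution_eq_zero (θ : ℝ → ℝ)
    (hθ : Differentiable ℝ θ)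
    (hode : ∀ t : ℝ, deriv θ t = -(θ t) ^ 2) :
    ∀ t : ℝ, θ t = 0 := by
  intro t
  have h1 : θ t ≤ 0 := riccati_aux θ hθ hode t
  -- reflected function η s = -θ(-s)
  set η : ℝ → ℝ := fun s => -θ (-s) with hη
  have hηdiff : Differentiable ℝ η := (hθ.comp differentiable_neg).neg
  have hηderiv : ∀ s : ℝ, HasDerivAt η (-(η s) ^ 2) s := by
    intro s
    have h := (((hθ (-s)).hasDerivAt).comp s (hasDerivAt_neg s)).neg
    have heq : -(deriv θ (-s) * -1) = -(η s) ^ 2 := by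
      rw [hode (-s)]; simp [hη]
    rw [heq] at h
    exact h
  have hηode : ∀ s : ℝ, deriv η s = -(η s) ^ 2 := fun s => (hηderiv s).deriv
  have h2 : η (-t) ≤ 0 := riccati_aux η hηdiff hηode (-t)
  simp [hη] at h2
  linarith
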